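/- Let g₁₁, g₂₂, ρ, k₁, k₂ be real numbers with g₁₁, g₂₂ > 0, ρ ≠ 0, k₁ ≠ 0, k₂ ≠ 0, and set H/K := (1/k₁ + 1/k₂)/2 (so 2H/K = 1/k₁ + 1/k₂, where H = (k₁+k₂)/2 and K = k₁k₂). Define g*₁₁ := k₁²g₁₁/(k₂²ρ²), g*₂₂ := k₂²g₂₂/(k₁²ρ²), k₁* := k₂, k₂* := k₁. Then the following six identities hold: (1) g*₁₁ = (1/ρ²)g₁₁ − (4H/(Kρ²))k₁g₁₁ + (4H²/(K²ρ²))k₁²g₁₁; (2) g*₂₂ = (1/ρ²)g₂₂ − (4H/(Kρ²))k₂g₂₂ + (4H²/(K²ρ²))k₂²g₂₂; (3) k₁* g*₁₁ = −(1/ρ²)k₁g₁₁ + (2H/(Kρ²))k₁²g₁₁; (4) k₂* g*₂₂ = −(1/ρ²)k₂g₂₂ + (2H/(Kρ²))k₂²g₂₂; (5) (k₁*)²g*₁₁ = (1/ρ²)k₁²g₁₁; (6) (k₂*)²g*₂₂ = (1/ρ²)k₂²g₂₂. (Expressed invariantly: for a pair of dual Ribaucour surfaces in curvature-line coordinates,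 I* = (1/ρ²)I − (4H/(Kρ²))II + (4H²/(K²ρ²))III, II* = −(1/ρ²)II + (2H/(Kρ²))III, and III* = (1/ρ²)III.) -/
import Mathlib

/-- the algebraic relations between the fundamental-form coefficients of a
pair of dual Ribaucour surfaces in curvature-line coordinates: with
`g*₁₁ = k₁²g₁₁/(k₂²ρ²)`, `g*₂₂ = k₂²g₂₂/(k₁²ρ²)`, `k₁* = k₂`, `k₂* = k₁` and
`H/K = (1/k₁ + 1/k₂)/2`, the six coefficient identities expressing
`I* = (1/ρ²)I - (4H/(Kρ²))II + (4H²/(K²ρ²))III`, `II* = -(1/ρ²)II + (2H/(Kρ²))III`,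
`III* = (1/ρ²)III` hold. -/
theorem dual_ribaucour_fundamental_forms
    (g₁₁ g₂₂ ρ k₁ k₂ : ℝ) (hg₁₁ : 0 < g₁₁) (hg₂₂ : 0 < g₂₂)
    (hρ : ρ ≠ 0) (hk₁ : k₁ ≠ 0) (hk₂ : k₂ ≠ 0)
    (HK : ℝ) (hHK : HK = (1 / k₁ + 1 / k₂) / 2)
    (gs₁₁ gs₂₂ ks₁ ks₂ : ℝ)
    (hgs₁₁ : gs₁₁ = k₁ ^ 2 * g₁₁ / (k₂ ^ 2 * ρ ^ 2))
    (hgs₂₂ : gs₂₂ = k₂ ^ 2 * g₂₂ / (k₁ ^ 2 * ρ ^ 2))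
    (hks₁ : ks₁ = k₂) (hks₂ : ks₂ = k₁) :
    gs₁₁ = (1 / ρ ^ 2) * g₁₁ - (4 * HK / ρ ^ 2) * (k₁ * g₁₁)
        + (4 * HK ^ 2 / ρ ^ 2) * (k₁ ^ 2 * g₁₁) ∧
    gs₂₂ = (1 / ρ ^ 2) * g₂₂ - (4 * HK / ρ ^ 2) * (k₂ * g₂₂)
        + (4 * HK ^ 2 / ρ ^ 2) * (k₂ ^ 2 * g₂₂) ∧
    ks₁ * gs₁₁ = -(1 / ρ ^ 2) * (k₁ * g₁₁) + (2 * HK / ρ ^ 2) * (k₁ ^ 2 * g₁₁) ∧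
    ks₂ * gs₂₂ = -(1 / ρ ^ 2) * (k₂ * g₂₂) + (2 * HK / ρ ^ 2) * (k₂ ^ 2 * g₂₂) ∧
    ks₁ ^ 2 * gs₁₁ = (1 / ρ ^ 2) * (k₁ ^ 2 * g₁₁) ∧
    ks₂ ^ 2 * gs₂₂ = (1 / ρ ^ 2) * (k₂ ^ 2 * g₂₂) := by
  subst hHK hgs₁₁ hgs₂₂ hks₁ hks₂
  refine ⟨?_, ?_, ?_, ?_, ?_, ?_⟩ <;> field_simp <;> ring
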